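/- Let N, t, m₀ be positive real numbers, H = 2N/(2N + m₀·t), and f(x) = m₀·H / (exp(x/t) − (1 − H)). Then for all x ≥ 0, f(x) ≤ 2·N·m₀ / (2·N + m₀·x). -/

import Mathlib

/-!
Writing `S = 2N + m₀t`, the function is `f x = 2Nm₀ / (2N + S(exp (x/t) - 1))`, so the bound
reduces to `m₀x ≤ S(exp (x/t) - 1)`, which follows from `exp u ≥ 1 + u` and `m₀t ≤ S`.
-/

open Real

lemma le_mul_exp_div_sub_one {t : ℝ} (ht : 0 < t) (x : ℝ) : x ≤ t * (exp (x / t) - 1) := by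
  have h := mul_le_mul_of_nonneg_left (add_one_le_exp (x / t)) ht.le
  rw [mul_add, mul_div_cancel₀ x ht.ne'] at h
  linarith

lemma mul_le_mul_exp_div_sub_one {a b t x : ℝ} (ht : 0 < t) (ha : 0 ≤ a) (hab : a * t ≤ b)
    (hx : 0 ≤ x) : a * x ≤ b * (exp (x / t) - 1) :=
  calc a * x ≤ a * t * (exp (x / t) - 1) := by
        rw [mul_assoc]; exact mul_le_mul_of_nonneg_left (le_mul_exp_div_sub_one ht x) ha
    _ ≤ b * (exp (x / t) - 1) :=
        mul_le_mul_of_nonneg_right hab (sub_nonneg.2 (one_le_exp (by positivity)))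

theorem stmt_4 (N t m₀ : ℝ) (hN : 0 < N) (ht : 0 < t) (hm : 0 < m₀)
    (H : ℝ) (hH : H = 2 * N / (2 * N + m₀ * t))
    (f : ℝ → ℝ) (hf : ∀ x, f x = m₀ * H / (Real.exp (x / t) - (1 - H))) :
    ∀ x ≥ (0 : ℝ), f x ≤ 2 * N * m₀ / (2 * N + m₀ * x) := by
  intro x hx
  set S := 2 * N + m₀ * t
  have hS : 0 < S := by positivity
  have hgrowth : m₀ * x ≤ S * (exp (x / t) - 1) :=
    mul_le_mul_exp_div_sub_one ht hm.le (by simp only [S]; linarith) hx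
  have hf_eq : f x = 2 * N * m₀ / (2 * N + S * (exp (x / t) - 1)) := by
    rw [hf, hH]
    field_simp
    ring
  rw [hf_eq]
  exact div_le_div_of_nonneg_left (by positivity) (by positivity) (by linarith)
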